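/- arXiv:2403.02355 — 3 statements merged into one kernel-verified Lean document; each statement's English description precedes it below -/
import Mathlib

section
/- Let r be a nonzero purely imaginary quaternion (Re(r) = 0 and r ≠ 0). Then there exist quaternions h and t such that (h ⊗ r) · t ≠ (t ⊗ r) · h. (Proposition 2: TQuatE can model the asymmetric relation pattern when the real part of the relation embedding is zero.) -/
open Quaternion

/-- The dot product of two quaternions: the sum of the products of their
real and three imaginary components. -/
noncomputable def qdot (q₁ q₂ : ℍ[ℝ]) : ℝ :=
  q₁.re * q₂.re + q₁.imI * q₂.imI + q₁.imJ * q₂.imJ + q₁.imK * q₂.imK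

lemma qdot_one_right (q : ℍ[ℝ]) : qdot q 1 = q.re := by
  simp [qdot]

lemma qdot_self (q : ℍ[ℝ]) : qdot q q = normSq q := by
  rw [qdot, normSq_def']
  ring

lemma Quaternion.re_mul_self_of_re_eq_zero {r : ℍ[ℝ]} (hre : r.re = 0) :
    (r * r).re = -normSq r := by
  rw [normSq_def, star_eq_neg.mpr hre, mul_neg, re_neg, neg_neg]

theorem asymmetric_pattern_scalar (r : ℍ[ℝ]) (hre : r.re = 0) (hne : r ≠ 0) :
    ∃ h t : ℍ[ℝ], qdot (h * r) t ≠ qdot (t * r) h := by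
  refine ⟨1, r, ?_⟩
  rw [one_mul, qdot_self, qdot_one_right, re_mul_self_of_re_eq_zero hre]
  intro hsymm
  exact normSq_ne_zero.mpr hne (by linarith)
end

section
/- Let d be a natural number and let h, r₁, r₂, t : Fin d → ℍ be quaternion vectors such that r₂ i = conj(r₁ i) for all i. Then ∑_{i} ((h i ⊗ r₁ i) · (t i)) = ∑_{i} ((t i ⊗ r₂ i) · (h i)). (Vector form of Proposition 3: the score of (h, r₁, t) equals the score of (t, r₂, h) when r₂ is the componentwise conjugate of r₁.) -/
open Quaternion

lemma qdot_eq_re_mul_star (p q : ℍ[ℝ]) : qdot p q = (p * star q).re := by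
  simp only [qdot, Quaternion.re_mul, Quaternion.re_star, Quaternion.imI_star,
    Quaternion.imJ_star, Quaternion.imK_star]
  ring

/-- Both sides are the real part of `a * b * star c`, the right one of its conjugate. -/
lemma qdot_mul_left (a b c : ℍ[ℝ]) : qdot (a * b) c = qdot (c * star b) a := by
  rw [qdot_eq_re_mul_star, qdot_eq_re_mul_star, ← Quaternion.re_star, star_mul, star_mul,
    star_star, mul_assoc]

theorem inverse_pattern_vector (d : ℕ) (h r₁ r₂ t : Fin d → ℍ[ℝ])
    (hconj : ∀ i, r₂ i = star (r₁ i)) :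
    ∑ i, qdot (h i * r₁ i) (t i) = ∑ i, qdot (t i * r₂ i) (h i) :=
  Finset.sum_congr rfl fun i _ => by rw [hconj i, qdot_mul_left]
end

section
/- Let d be a natural number, let τ₁, τ₂ : Fin d → ℍ be vectors of unit quaternions (‖τ₁ i‖ = 1 and ‖τ₂ i‖ = 1 for all i), and let r₁, r₂ : Fin d → ℍ be quaternion vectors such that for every i, r₂ i = (conj(τ₂ i) ⊗ τ₁ i) ⊗ r₁ i ⊗ conj(conj(τ₂ i) ⊗ τ₁ i). Then for every i, τ₁ i ⊗ r₁ i ⊗ conj(τ₁ i) = τ₂ i ⊗ r₂ i ⊗ conj(τ₂ i), and consequently for all quaternion vectors h, t : Fin d → ℍ, ∑_{i} ((h i ⊗ (τ₁ i ⊗ r₁ i ⊗ conj(τ₁ i))) · (t i)) = ∑_{i} ((h i ⊗ (τ₂ i ⊗ r₂ i ⊗ conj(τ₂ i))) · (t i)). (Vector form of Proposition 5: evolutionary relations yield equal TQuatE scores.) -/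
/-! Conjugating by `star τ₂ * τ₁` and then by `τ₂` is conjugating by `τ₂ * star τ₂ * τ₁ = τ₁`,
since `τ₂` is a unit quaternion. -/

open Quaternion

theorem Quaternion.self_mul_star_eq_one_of_norm_eq_one {q : ℍ[ℝ]} (hq : ‖q‖ = 1) :
    q * star q = 1 := by
  rw [self_mul_star, normSq_eq_norm_mul_self, hq, mul_one, coe_one]

theorem conj_conj_star_mul_of_mul_star_eq_one {R : Type*} [Monoid R] [StarMul R] {u : R}
    (hu : u * star u = 1) (a r : R) :
    u * (star u * a * r * star (star u * a)) * star u = a * r * star a := by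
  simp only [star_mul, star_star, ← mul_assoc, hu, one_mul]
  simp only [mul_assoc, hu, mul_one]

theorem evolutionary_pattern_vector_general (d : ℕ) (τ₁ τ₂ : Fin d → ℍ[ℝ])
    (hτ₂ : ∀ i, ‖τ₂ i‖ = 1) (r₁ r₂ : Fin d → ℍ[ℝ])
    (hr : ∀ i, r₂ i = (star (τ₂ i) * τ₁ i) * r₁ i * star (star (τ₂ i) * τ₁ i)) :
    (∀ i, τ₁ i * r₁ i * star (τ₁ i) = τ₂ i * r₂ i * star (τ₂ i)) ∧
    ∀ h t : Fin d → ℍ[ℝ],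
      ∑ i, qdot (h i * (τ₁ i * r₁ i * star (τ₁ i))) (t i) =
      ∑ i, qdot (h i * (τ₂ i * r₂ i * star (τ₂ i))) (t i) := by
  have hrel : ∀ i, τ₁ i * r₁ i * star (τ₁ i) = τ₂ i * r₂ i * star (τ₂ i) := fun i => by
    rw [hr i, conj_conj_star_mul_of_mul_star_eq_one
      (self_mul_star_eq_one_of_norm_eq_one (hτ₂ i))]
  exact ⟨hrel, fun h t => Finset.sum_congr rfl fun i _ => by rw [hrel i]⟩

theorem evolutionary_pattern_vector (d : ℕ) (τ₁ τ₂ : Fin d → ℍ[ℝ])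
    (hτ₁ : ∀ i, ‖τ₁ i‖ = 1) (hτ₂ : ∀ i, ‖τ₂ i‖ = 1) (r₁ r₂ : Fin d → ℍ[ℝ])
    (hr : ∀ i, r₂ i = (star (τ₂ i) * τ₁ i) * r₁ i * star (star (τ₂ i) * τ₁ i)) :
    (∀ i, τ₁ i * r₁ i * star (τ₁ i) = τ₂ i * r₂ i * star (τ₂ i)) ∧
    ∀ h t : Fin d → ℍ[ℝ],
      ∑ i, qdot (h i * (τ₁ i * r₁ i * star (τ₁ i))) (t i) =
      ∑ i, qdot (h i * (τ₂ i * r₂ i * star (τ₂ i))) (t i) :=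
  evolutionary_pattern_vector_general d τ₁ τ₂ hτ₂ r₁ r₂ hr
end
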